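/- arXiv:1806.07523 — 2 statements merged into one kernel-verified Lean document; each statement's English description precedes it below -/
import Mathlib

section
/- Soundness of schematic proofs for the quantifier rules: if a schematic sequent Ψ; Σ; Γ ⊢ B has a derivation Π using the schematic proof rules, then for any substitution Φ mapping each type variable in Ψ to a ground type, the instantiated derivation Π[Φ] is a valid derivation in the simply typed sequent calculus of the sequent Σ[Φ]; Γ[Φ] ⊢ B[Φ]. -/
/-! Soundness of schematic proofs: a sequent calculus `G` over simply typed terms,
its schematic version (sequents carry a set `Ψ` of type variables), and the
statement that type instantiation maps schematic derivations to `G`-derivations. -/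

/-- Simple types, possibly containing type variables. -/
inductive Ty
  | tvar : ℕ → Ty
  | base : ℕ → Ty
  | arr : Ty → Ty → Ty

/-- Ground types contain no type variables. -/
def GroundTy : Ty → Prop
  | .tvar _ => False
  | .base _ => True
  | .arr τ1 τ2 => GroundTy τ1 ∧ GroundTy τ2

/-- Action of a type substitution on types. -/
def tsubstTy (φ : ℕ → Ty) : Ty → Ty
  | .tvar a => φ a
  | .base b => .base b
  | .arr τ1 τ2 => .arr (tsubstTy φ τ1) (tsubstTy φ τ2)

/-- λ-terms in de Bruijn style; variables refer to the eigenvariable context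
(or to enclosing abstractions); constants carry their types. -/
inductive Tm
  | var : ℕ → Tm
  | const : ℕ → Ty → Tm
  | app : Tm → Tm → Tm
  | lam : Ty → Tm → Tm

/-- Shift the free variables of a term above cutoff `c`. -/
def shiftTm (c : ℕ) : Tm → Tm
  | .var n => if n < c then .var n else .var (n + 1)
  | .const k τ => .const k τ
  | .app t1 t2 => .app (shiftTm c t1) (shiftTm c t2)
  | .lam τ t => .lam τ (shiftTm (c + 1) t)

/-- Substitute `s` for the variable with index `c` in a term. -/
def substTm (c : ℕ) (s : Tm) : Tm → Tm
  | .var n => if n < c then .var n else if n = c then (shiftTm 0)^[c] s else .var (n - 1)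
  | .const k τ => .const k τ
  | .app t1 t2 => .app (substTm c s t1) (substTm c s t2)
  | .lam τ t => .lam τ (substTm (c + 1) s t)

/-- Action of a type substitution on the type annotations within a term. -/
def tsubstTm (φ : ℕ → Ty) : Tm → Tm
  | .var n => .var n
  | .const k τ => .const k (tsubstTy φ τ)
  | .app t1 t2 => .app (tsubstTm φ t1) (tsubstTm φ t2)
  | .lam τ t => .lam (tsubstTy φ τ) (tsubstTm φ t)

/-- The typing judgment for terms relative to an eigenvariable context. -/
inductive HasTy : List Ty → Tm → Ty → Prop
  | var {Sg : List Ty} {n : ℕ} {τ : Ty} : Sg[n]? = some τ → HasTy Sg (.var n) τ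
  | const {Sg : List Ty} (k : ℕ) (τ : Ty) : HasTy Sg (.const k τ) τ
  | app {Sg : List Ty} {t1 t2 : Tm} {τ1 τ2 : Ty} :
      HasTy Sg t1 (.arr τ1 τ2) → HasTy Sg t2 τ1 → HasTy Sg (.app t1 t2) τ2
  | lam {Sg : List Ty} {t : Tm} {τ1 τ2 : Ty} :
      HasTy (τ1 :: Sg) t τ2 → HasTy Sg (.lam τ1 t) (.arr τ1 τ2)

/-- Formulas: atoms, the propositional connectives, and typed quantifiers
(binding the term variable with index 0). -/
inductive Fm
  | atom : ℕ → Tm → Fm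
  | top : Fm
  | bot : Fm
  | conj : Fm → Fm → Fm
  | disj : Fm → Fm → Fm
  | imp : Fm → Fm → Fm
  | all : Ty → Fm → Fm
  | ex : Ty → Fm → Fm

def shiftFm (c : ℕ) : Fm → Fm
  | .atom p t => .atom p (shiftTm c t)
  | .top => .top
  | .bot => .bot
  | .conj F1 F2 => .conj (shiftFm c F1) (shiftFm c F2)
  | .disj F1 F2 => .disj (shiftFm c F1) (shiftFm c F2)
  | .imp F1 F2 => .imp (shiftFm c F1) (shiftFm c F2)
  | .all τ F => .all τ (shiftFm (c + 1) F)
  | .ex τ F => .ex τ (shiftFm (c + 1) F)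

def substFm (c : ℕ) (s : Tm) : Fm → Fm
  | .atom p t => .atom p (substTm c s t)
  | .top => .top
  | .bot => .bot
  | .conj F1 F2 => .conj (substFm c s F1) (substFm c s F2)
  | .disj F1 F2 => .disj (substFm c s F1) (substFm c s F2)
  | .imp F1 F2 => .imp (substFm c s F1) (substFm c s F2)
  | .all τ F => .all τ (substFm (c + 1) s F)
  | .ex τ F => .ex τ (substFm (c + 1) s F)

/-- Action of a type substitution on formulas. -/
def tsubstFm (φ : ℕ → Ty) : Fm → Fm
  | .atom p t => .atom p (tsubstTm φ t)
  | .top => .top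
  | .bot => .bot
  | .conj F1 F2 => .conj (tsubstFm φ F1) (tsubstFm φ F2)
  | .disj F1 F2 => .disj (tsubstFm φ F1) (tsubstFm φ F2)
  | .imp F1 F2 => .imp (tsubstFm φ F1) (tsubstFm φ F2)
  | .all τ F => .all (tsubstTy φ τ) (tsubstFm φ F)
  | .ex τ F => .ex (tsubstTy φ τ) (tsubstFm φ F)

/-- The simply typed intuitionistic sequent calculus `G`:
`Deriv Sg Γ F` means the sequent `Sg; Γ ⊢ F` is derivable. -/
inductive Deriv : List Ty → List Fm → Fm → Prop
  | init {Sg Γ F} : F ∈ Γ → Deriv Sg Γ F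
  | botL {Sg Γ F} : Fm.bot ∈ Γ → Deriv Sg Γ F
  | topR {Sg Γ} : Deriv Sg Γ .top
  | conjR {Sg Γ F1 F2} : Deriv Sg Γ F1 → Deriv Sg Γ F2 → Deriv Sg Γ (.conj F1 F2)
  | conjL {Sg Γ F1 F2 C} : Fm.conj F1 F2 ∈ Γ → Deriv Sg (F1 :: F2 :: Γ) C → Deriv Sg Γ C
  | disjR1 {Sg Γ F1 F2} : Deriv Sg Γ F1 → Deriv Sg Γ (.disj F1 F2)
  | disjR2 {Sg Γ F1 F2} : Deriv Sg Γ F2 → Deriv Sg Γ (.disj F1 F2)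
  | disjL {Sg Γ F1 F2 C} : Fm.disj F1 F2 ∈ Γ →
      Deriv Sg (F1 :: Γ) C → Deriv Sg (F2 :: Γ) C → Deriv Sg Γ C
  | impR {Sg Γ F1 F2} : Deriv Sg (F1 :: Γ) F2 → Deriv Sg Γ (.imp F1 F2)
  | impL {Sg Γ F1 F2 C} : Fm.imp F1 F2 ∈ Γ →
      Deriv Sg Γ F1 → Deriv Sg (F2 :: Γ) C → Deriv Sg Γ C
  | allR {Sg Γ τ B} : Deriv (τ :: Sg) (Γ.map (shiftFm 0)) B → Deriv Sg Γ (.all τ B)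
  | allL {Sg Γ τ B C} {t : Tm} : Fm.all τ B ∈ Γ → HasTy Sg t τ →
      Deriv Sg (substFm 0 t B :: Γ) C → Deriv Sg Γ C
  | exR {Sg Γ τ B} {t : Tm} : HasTy Sg t τ →
      Deriv Sg Γ (substFm 0 t B) → Deriv Sg Γ (.ex τ B)
  | exL {Sg Γ τ B C} : Fm.ex τ B ∈ Γ →
      Deriv (τ :: Sg) (B :: Γ.map (shiftFm 0)) (shiftFm 0 C) → Deriv Sg Γ C

/-- The schematic sequent calculus: the rules of `G` with a set `Ψ` of type
variables added uniformly to premises and conclusions. -/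
inductive SDeriv (Ψ : Set ℕ) : List Ty → List Fm → Fm → Prop
  | init {Sg Γ F} : F ∈ Γ → SDeriv Ψ Sg Γ F
  | botL {Sg Γ F} : Fm.bot ∈ Γ → SDeriv Ψ Sg Γ F
  | topR {Sg Γ} : SDeriv Ψ Sg Γ .top
  | conjR {Sg Γ F1 F2} : SDeriv Ψ Sg Γ F1 → SDeriv Ψ Sg Γ F2 → SDeriv Ψ Sg Γ (.conj F1 F2)
  | conjL {Sg Γ F1 F2 C} : Fm.conj F1 F2 ∈ Γ → SDeriv Ψ Sg (F1 :: F2 :: Γ) C → SDeriv Ψ Sg Γ C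
  | disjR1 {Sg Γ F1 F2} : SDeriv Ψ Sg Γ F1 → SDeriv Ψ Sg Γ (.disj F1 F2)
  | disjR2 {Sg Γ F1 F2} : SDeriv Ψ Sg Γ F2 → SDeriv Ψ Sg Γ (.disj F1 F2)
  | disjL {Sg Γ F1 F2 C} : Fm.disj F1 F2 ∈ Γ →
      SDeriv Ψ Sg (F1 :: Γ) C → SDeriv Ψ Sg (F2 :: Γ) C → SDeriv Ψ Sg Γ C
  | impR {Sg Γ F1 F2} : SDeriv Ψ Sg (F1 :: Γ) F2 → SDeriv Ψ Sg Γ (.imp F1 F2)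
  | impL {Sg Γ F1 F2 C} : Fm.imp F1 F2 ∈ Γ →
      SDeriv Ψ Sg Γ F1 → SDeriv Ψ Sg (F2 :: Γ) C → SDeriv Ψ Sg Γ C
  | allR {Sg Γ τ B} : SDeriv Ψ (τ :: Sg) (Γ.map (shiftFm 0)) B → SDeriv Ψ Sg Γ (.all τ B)
  | allL {Sg Γ τ B C} {t : Tm} : Fm.all τ B ∈ Γ → HasTy Sg t τ →
      SDeriv Ψ Sg (substFm 0 t B :: Γ) C → SDeriv Ψ Sg Γ C
  | exR {Sg Γ τ B} {t : Tm} : HasTy Sg t τ →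
      SDeriv Ψ Sg Γ (substFm 0 t B) → SDeriv Ψ Sg Γ (.ex τ B)
  | exL {Sg Γ τ B C} : Fm.ex τ B ∈ Γ →
      SDeriv Ψ (τ :: Sg) (B :: Γ.map (shiftFm 0)) (shiftFm 0 C) → SDeriv Ψ Sg Γ C

/-! Type instantiation commutes with shifting and substituting terms and preserves typing, so
it sends every instance of a rule of `G` to an instance of the same rule. Since the schematic
rules are those of `G` with `Ψ` carried along inertly, forgetting `Ψ` turns a schematic
derivation into a `G`-derivation, which can then be instantiated rule by rule. -/

theorem tsubstTm_semiconj_shiftTm (φ : ℕ → Ty) (c : ℕ) :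
    Function.Semiconj (tsubstTm φ) (shiftTm c) (shiftTm c) := by
  intro t
  induction t generalizing c with
  | var n => by_cases hn : n < c <;> simp [shiftTm, tsubstTm, hn]
  | const k τ => rfl
  | app t1 t2 ih1 ih2 => simp only [shiftTm, tsubstTm, ih1, ih2]
  | lam τ t ih => simp only [shiftTm, tsubstTm, ih]

theorem tsubstTm_substTm (φ : ℕ → Ty) (c : ℕ) (s t : Tm) :
    tsubstTm φ (substTm c s t) = substTm c (tsubstTm φ s) (tsubstTm φ t) := by
  induction t generalizing c with
  | var n =>
    have hshift := ((tsubstTm_semiconj_shiftTm φ 0).iterate_right c) s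
    by_cases hlt : n < c
    · simp [substTm, tsubstTm, hlt]
    · by_cases heq : n = c <;> simp [substTm, tsubstTm, hlt, heq, hshift]
  | const k τ => rfl
  | app t1 t2 ih1 ih2 => simp only [substTm, tsubstTm, ih1, ih2]
  | lam τ t ih => simp only [substTm, tsubstTm, ih]

theorem tsubstFm_semiconj_shiftFm (φ : ℕ → Ty) (c : ℕ) :
    Function.Semiconj (tsubstFm φ) (shiftFm c) (shiftFm c) := by
  intro F
  induction F generalizing c <;>
    simp only [shiftFm, tsubstFm, tsubstTm_semiconj_shiftTm φ _ _, *]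

theorem tsubstFm_substFm (φ : ℕ → Ty) (c : ℕ) (s : Tm) (F : Fm) :
    tsubstFm φ (substFm c s F) = substFm c (tsubstTm φ s) (tsubstFm φ F) := by
  induction F generalizing c <;> simp only [substFm, tsubstFm, tsubstTm_substTm, *]

theorem map_tsubstFm_map_shiftFm (φ : ℕ → Ty) (c : ℕ) (Γ : List Fm) :
    (Γ.map (shiftFm c)).map (tsubstFm φ) = (Γ.map (tsubstFm φ)).map (shiftFm c) := by
  simp only [List.map_map, (tsubstFm_semiconj_shiftFm φ c).comp_eq]

theorem HasTy.tsubst {Sg : List Ty} {t : Tm} {τ : Ty} (φ : ℕ → Ty) (h : HasTy Sg t τ) :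
    HasTy (Sg.map (tsubstTy φ)) (tsubstTm φ t) (tsubstTy φ τ) := by
  induction h with
  | var hn => exact .var (by simp [hn])
  | const k τ => exact .const k _
  | app _ _ ih1 ih2 => exact .app ih1 ih2
  | lam _ ih => exact .lam ih

theorem SDeriv.toDeriv {Ψ : Set ℕ} {Sg : List Ty} {Γ : List Fm} {B : Fm}
    (h : SDeriv Ψ Sg Γ B) : Deriv Sg Γ B := by
  induction h with
  | init hF => exact .init hF
  | botL hF => exact .botL hF
  | topR => exact .topR
  | conjR _ _ ih1 ih2 => exact .conjR ih1 ih2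
  | conjL hF _ ih => exact .conjL hF ih
  | disjR1 _ ih => exact .disjR1 ih
  | disjR2 _ ih => exact .disjR2 ih
  | disjL hF _ _ ih1 ih2 => exact .disjL hF ih1 ih2
  | impR _ ih => exact .impR ih
  | impL hF _ _ ih1 ih2 => exact .impL hF ih1 ih2
  | allR _ ih => exact .allR ih
  | allL hF ht _ ih => exact .allL hF ht ih
  | exR ht _ ih => exact .exR ht ih
  | exL hF _ ih => exact .exL hF ih

theorem Deriv.tsubst {Sg : List Ty} {Γ : List Fm} {B : Fm} (φ : ℕ → Ty) (h : Deriv Sg Γ B) :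
    Deriv (Sg.map (tsubstTy φ)) (Γ.map (tsubstFm φ)) (tsubstFm φ B) := by
  induction h with
  | init hF => exact .init (List.mem_map_of_mem hF)
  | botL hF => exact .botL (List.mem_map_of_mem (f := tsubstFm φ) hF)
  | topR => exact .topR
  | conjR _ _ ih1 ih2 => exact .conjR ih1 ih2
  | conjL hF _ ih => exact .conjL (List.mem_map_of_mem (f := tsubstFm φ) hF) ih
  | disjR1 _ ih => exact .disjR1 ih
  | disjR2 _ ih => exact .disjR2 ih
  | disjL hF _ _ ih1 ih2 => exact .disjL (List.mem_map_of_mem (f := tsubstFm φ) hF) ih1 ih2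
  | impR _ ih => exact .impR ih
  | impL hF _ _ ih1 ih2 => exact .impL (List.mem_map_of_mem (f := tsubstFm φ) hF) ih1 ih2
  | allR _ ih =>
    refine .allR ?_
    rwa [← map_tsubstFm_map_shiftFm]
  | allL hF ht _ ih =>
    refine .allL (List.mem_map_of_mem (f := tsubstFm φ) hF) (ht.tsubst φ) ?_
    rwa [← tsubstFm_substFm]
  | exR ht _ ih =>
    refine .exR (ht.tsubst φ) ?_
    rwa [← tsubstFm_substFm]
  | exL hF _ ih =>
    refine .exL (List.mem_map_of_mem (f := tsubstFm φ) hF) ?_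
    rwa [← map_tsubstFm_map_shiftFm, ← tsubstFm_semiconj_shiftFm]

theorem schematic_soundness_general (Ψ : Set ℕ) (Sg : List Ty) (Γ : List Fm) (B : Fm)
    (h : SDeriv Ψ Sg Γ B) (Φ : ℕ → Ty) :
    Deriv (Sg.map (tsubstTy Φ)) (Γ.map (tsubstFm Φ)) (tsubstFm Φ B) :=
  h.toDeriv.tsubst Φ

/-- Soundness of schematic proofs: any ground type instantiation of a schematic
derivation of `Ψ; Sg; Γ ⊢ B` yields a derivation in `G` of the corresponding
instance `Sg[Φ]; Γ[Φ] ⊢ B[Φ]`. -/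
theorem schematic_soundness (Ψ : Set ℕ) (Sg : List Ty) (Γ : List Fm) (B : Fm)
    (h : SDeriv Ψ Sg Γ B) (Φ : ℕ → Ty) (hΦ : ∀ a ∈ Ψ, GroundTy (Φ a)) :
    Deriv (Sg.map (tsubstTy Φ)) (Γ.map (tsubstFm Φ)) (tsubstFm Φ B) :=
  schematic_soundness_general Ψ Sg Γ B h Φ
end

section
/- The two-level encoding is adequate for the Horn fragment: a goal formula g is derivable from a fixed Horn program in the specification logic if and only if there exists a natural number n such that prove n g holds in the meta-level encoding. -/
/-- Goal formulas over a type of atoms: atoms, truth, and conjunctions. -/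
inductive Goal (A : Type*)
  | tru : Goal A
  | conj : Goal A → Goal A → Goal A
  | atom : A → Goal A

/-- Specification-logic derivability from a Horn program `prog`. -/
inductive Derives {A : Type*} (prog : A → Goal A → Prop) : Goal A → Prop
  | tru : Derives prog .tru
  | conj {g1 g2 : Goal A} :
      Derives prog g1 → Derives prog g2 → Derives prog (.conj g1 g2)
  | backchain {a : A} {g : Goal A} :
      prog a g → Derives prog g → Derives prog (.atom a)

/-- Height-indexed provability (the meta-level encoding). -/
inductive Prove {A : Type*} (prog : A → Goal A → Prop) : ℕ → Goal A → Prop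
  | tru (n : ℕ) : Prove prog n .tru
  | conj {n : ℕ} {g1 g2 : Goal A} :
      Prove prog n g1 → Prove prog n g2 → Prove prog (n + 1) (.conj g1 g2)
  | backchain {n : ℕ} {a : A} {g : Goal A} :
      prog a g → Prove prog n g → Prove prog (n + 1) (.atom a)


section
variable {A : Type*} {prog : A → Goal A → Prop}

theorem Prove.succ {n : ℕ} {g : Goal A} (h : Prove prog n g) : Prove prog (n + 1) g := by
  induction h with
  | tru => exact .tru _
  | conj _ _ ih₁ ih₂ => exact .conj ih₁ ih₂
  | backchain hp _ ih => exact .backchain hp ih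

theorem Prove.mono {m n : ℕ} {g : Goal A} (h : Prove prog m g) (hmn : m ≤ n) :
    Prove prog n g :=
  Nat.le_induction h (fun _ _ => Prove.succ) n hmn

theorem Prove.derives {n : ℕ} {g : Goal A} (h : Prove prog n g) : Derives prog g := by
  induction h with
  | tru => exact .tru
  | conj _ _ ih₁ ih₂ => exact .conj ih₁ ih₂
  | backchain hp _ ih => exact .backchain hp ih

theorem Derives.exists_prove {g : Goal A} (h : Derives prog g) : ∃ n, Prove prog n g := by
  induction h with
  | tru => exact ⟨0, .tru 0⟩
  | conj _ _ ih₁ ih₂ =>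
    obtain ⟨n₁, h₁⟩ := ih₁
    obtain ⟨n₂, h₂⟩ := ih₂
    exact ⟨max n₁ n₂ + 1, .conj (h₁.mono (le_max_left _ _)) (h₂.mono (le_max_right _ _))⟩
  | backchain hp _ ih =>
    obtain ⟨n, hn⟩ := ih
    exact ⟨n + 1, .backchain hp hn⟩

end

theorem derives_iff_exists_prove {A : Type*} (prog : A → Goal A → Prop) (g : Goal A) :
    Derives prog g ↔ ∃ n : ℕ, Prove prog n g :=
  ⟨Derives.exists_prove, fun ⟨_, h⟩ => h.derives⟩
end
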